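/- Suppose a group G acts geometrically on a proper CAT(0) space X and let g ∈ G have infinite order. Then g is a hyperbolic isometry of X, and the fixed-point set of g in ∂X satisfies 𝓕_g = L(Z_g) = ∂Min(g); in particular 𝓕_g is nonempty (it contains the endpoints g^{±∞} of an axis of g). -/

import Mathlib

/-- A geodesic ray: an isometric embedding of `[0,∞)`. -/
def GeodesicRay {X : Type*} [MetricSpace X] (ξ : ℝ → X) : Prop :=
  ∀ s t : ℝ, 0 ≤ s → 0 ≤ t → dist (ξ s) (ξ t) = |s - t|

/-- Two geodesic rays are asymptotic if they stay at bounded distance. -/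
def Asymptotic {X : Type*} [MetricSpace X] (ξ ζ : ℝ → X) : Prop :=
  ∃ N : ℝ, ∀ t : ℝ, 0 ≤ t → dist (ξ t) (ζ t) ≤ N

/-- `γ` restricted to `[a,b]` is a geodesic. -/
def IsGeodesicOn {X : Type*} [MetricSpace X] (γ : ℝ → X) (a b : ℝ) : Prop :=
  ∀ s ∈ Set.Icc a b, ∀ t ∈ Set.Icc a b, dist (γ s) (γ t) = |s - t|

/-- A geodesic metric space: any two points are joined by a geodesic. -/
def GeodesicSpace (X : Type*) [MetricSpace X] : Prop :=
  ∀ x y : X, ∃ γ : ℝ → X, γ 0 = x ∧ γ (dist x y) = y ∧ IsGeodesicOn γ 0 (dist x y)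

/-- A CAT(0) space: a geodesic space satisfying the CN (Bruhat–Tits) inequality,
which is equivalent to the CAT(0) comparison-triangle inequality. -/
def CAT0 (X : Type*) [MetricSpace X] : Prop :=
  GeodesicSpace X ∧
  ∀ x y z m : X, dist y m = dist y z / 2 → dist z m = dist y z / 2 →
    dist x m ^ 2 ≤ (dist x y ^ 2 + dist x z ^ 2) / 2 - dist y z ^ 2 / 4

/-- The translation length of an isometry. -/
noncomputable def translationLength {X : Type*} [MetricSpace X] (g : X ≃ᵢ X) : ℝ :=
  ⨅ x : X, dist x (g x)

/-- The minimal set of an isometry. -/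
noncomputable def minSet {X : Type*} [MetricSpace X] (g : X ≃ᵢ X) : Set X :=
  {x | dist x (g x) = translationLength g}

/-- A hyperbolic isometry: nonempty minimal set and positive translation length. -/
def IsHyperbolic {X : Type*} [MetricSpace X] (g : X ≃ᵢ X) : Prop :=
  (minSet g).Nonempty ∧ 0 < translationLength g

/-- The set of geodesic rays in `X`. -/
def Ray (X : Type*) [MetricSpace X] := {ξ : ℝ → X // GeodesicRay ξ}

/-- Asymptoticity is an equivalence relation on geodesic rays. -/
def raySetoid (X : Type*) [MetricSpace X] : Setoid (Ray X) where
  r ξ ζ := Asymptotic ξ.1 ζ.1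
  iseqv := by
    refine ⟨fun ξ => ⟨0, fun t _ => by simp⟩, fun {ξ ζ} h => ?_, fun {a b c} h h' => ?_⟩
    · obtain ⟨N, hN⟩ := h
      exact ⟨N, fun t ht => by rw [dist_comm]; exact hN t ht⟩
    · obtain ⟨N, hN⟩ := h; obtain ⟨M, hM⟩ := h'
      exact ⟨N + M, fun t ht =>
        (dist_triangle _ (b.1 t) _).trans (add_le_add (hN t ht) (hM t ht))⟩

/-- The (visual) boundary of `X`: asymptotic classes of geodesic rays. -/
def Boundary (X : Type*) [MetricSpace X] := Quotient (raySetoid X)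

/-- The image of a geodesic ray under an isometry. -/
def rayMap {X : Type*} [MetricSpace X] (g : X ≃ᵢ X) (ξ : Ray X) : Ray X :=
  ⟨fun t => g (ξ.1 t), fun s t hs ht => by
    rw [IsometryEquiv.dist_eq]; exact ξ.2 s t hs ht⟩

/-- The induced map of an isometry on the boundary. -/
def boundaryMap {X : Type*} [MetricSpace X] (g : X ≃ᵢ X) : Boundary X → Boundary X :=
  @Quotient.map _ _ (raySetoid X) (raySetoid X) (rayMap g)
    (fun ξ ζ h => by
      obtain ⟨N, hN⟩ := h
      exact ⟨N, fun t ht => by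
        simpa [rayMap, IsometryEquiv.dist_eq] using hN t ht⟩)

/-- The boundary of a subset `A ⊆ X`: classes of geodesic rays with image in `A`. -/
def subBoundary {X : Type*} [MetricSpace X] (A : Set X) : Set (Boundary X) :=
  {α | ∃ ξ : Ray X, (∀ t : ℝ, 0 ≤ t → ξ.1 t ∈ A) ∧ Quotient.mk (raySetoid X) ξ = α}

section GroupAction

variable {G : Type*} {X : Type*} [Group G] [MetricSpace X] [MulAction G X] [IsIsometricSMul G X]

/-- The image of a geodesic ray under the action of a group element. -/
def smulRay (g : G) (ξ : Ray X) : Ray X :=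
  ⟨fun t => g • ξ.1 t, fun s t hs ht => by rw [dist_smul]; exact ξ.2 s t hs ht⟩

/-- The induced action of a group element on the boundary. -/
def boundarySMul (g : G) : Boundary X → Boundary X :=
  @Quotient.map _ _ (raySetoid X) (raySetoid X) (smulRay g)
    (fun ξ ζ h => by
      obtain ⟨N, hN⟩ := h
      exact ⟨N, fun t ht => by simpa [smulRay, dist_smul] using hN t ht⟩)

/-- Convergence of a sequence of points of `X` to the boundary point of the ray `ξ`
issuing from `x₀`, in the cone topology: eventually the points leave every ball around
`x₀` and the geodesics from `x₀` to them fellow-travel `ξ`. -/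
def ConvergesTo (x₀ : X) (x : ℕ → X) (ξ : Ray X) : Prop :=
  ∀ r > (0:ℝ), ∀ ε > (0:ℝ), ∃ n₀ : ℕ, ∀ n ≥ n₀,
    r < dist x₀ (x n) ∧
    ∀ γ : ℝ → X, IsGeodesicOn γ 0 (dist x₀ (x n)) → γ 0 = x₀ → γ (dist x₀ (x n)) = x n →
      dist (ξ.1 r) (γ r) < ε

/-- The limit set of a subset `A ⊆ G`: boundary points which are limits of orbit
sequences `vᵢ • x₀` with `vᵢ ∈ A`. -/
def LimitSet (A : Set G) (x₀ : X) : Set (Boundary X) :=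
  {α | ∃ ξ : Ray X, ξ.1 0 = x₀ ∧ Quotient.mk (raySetoid X) ξ = α ∧
    ∃ v : ℕ → G, (∀ i, v i ∈ A) ∧ ConvergesTo x₀ (fun i => v i • x₀) ξ}

/-- A (metrically) proper action: orbit balls contain only finitely many orbit points. -/
def ProperAction (G : Type*) (X : Type*) [Group G] [MetricSpace X] [MulAction G X] : Prop :=
  ∀ x₀ : X, ∀ r : ℝ, {h : G | dist x₀ (h • x₀) ≤ r}.Finite

/-- A cocompact action: some orbit is coarsely dense. -/
def CocompactAction (G : Type*) (X : Type*) [Group G] [MetricSpace X] [MulAction G X] : Prop :=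
  ∀ x₀ : X, ∃ N > (0:ℝ), ∀ x : X, ∃ v : G, dist (v • x₀) x ≤ N

/-- The centralizer of `g` in `G`. -/
def Zg {G : Type*} [Group G] (g : G) : Set G := {v : G | g * v = v * g}

end GroupAction

/-- The translation length of the isometry of `X` given by the action of `g`. -/
noncomputable def tLenSMul (X : Type*) {G : Type*} [Group G] [MetricSpace X]
    [MulAction G X] (g : G) : ℝ :=
  ⨅ x : X, dist x (g • x)

/-- The minimal set of the isometry of `X` given by the action of `g`. -/
noncomputable def minSetSMul (X : Type*) {G : Type*} [Group G] [MetricSpace X]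
    [MulAction G X] (g : G) : Set X :=
  {x : X | dist x (g • x) = tLenSMul X g}


/-!
Everything rests on the convexity of the distance between two geodesics in a CAT(0) space
(obtained from the CN inequality by bisection); in particular the displacement `y ↦ d(y, g y)`
is convex along geodesics.

Cocompactness conjugates `g` into the finite set of elements moving `x₀` a bounded amount, so the
centralizer `Z_g` acts cocompactly on every sublevel set of the displacement. Hence the
displacement attains its infimum on a compact ball, and properness with infinite order makes the
infimum positive.

A ray whose class `g` fixes has bounded, hence nonincreasing, displacement, so the ray asymptotic
to it from a point of `Min(g)` stays in `Min(g)`; conversely `g` moves rays in `Min(g)` by `|g|`.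
A limit of `Z_g`-orbit points is fixed, because `g` moves both ends of a geodesic from `x₀` to
`v x₀`, `v ∈ Z_g`, by `d(x₀, g x₀)`; and the cocompact `Z_g`-action on `Min(g)` gives orbit
points tracking any ray in `Min(g)`. Rays come from ultrafilter limits of ever longer geodesic
segments from a point (`X` is proper): the segments `[x, gⁿ x]` with `x ∈ Min(g)` lie in `Min(g)`
and give a ray there, so the fixed set is nonempty.
-/

open Set Filter Topology Function

theorem nonpos_of_midpoint_le_of_lipschitz {f : ℝ → ℝ} {K : ℝ}
    (hmid : ∀ s ∈ Icc (0:ℝ) 1, ∀ t ∈ Icc (0:ℝ) 1, f ((s + t) / 2) ≤ (f s + f t) / 2)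
    (hlip : ∀ s ∈ Icc (0:ℝ) 1, ∀ t ∈ Icc (0:ℝ) 1, f t ≤ f s + K * |t - s|)
    (h0 : f 0 ≤ 0) (h1 : f 1 ≤ 0) {t : ℝ} (ht : t ∈ Icc (0:ℝ) 1) : f t ≤ 0 := by
  have bisect : ∀ n : ℕ, ∃ a ∈ Icc (0:ℝ) 1, ∃ b ∈ Icc (0:ℝ) 1,
      a ≤ t ∧ t ≤ b ∧ b - a = (2⁻¹ : ℝ) ^ n ∧ f a ≤ 0 ∧ f b ≤ 0 := by
    intro n
    induction n with
    | zero =>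
      exact ⟨0, ⟨le_rfl, zero_le_one⟩, 1, ⟨zero_le_one, le_rfl⟩, ht.1, ht.2, by simp, h0, h1⟩
    | succ n ih =>
      obtain ⟨a, ha, b, hb, hat, htb, hab, hfa, hfb⟩ := ih
      have hm : (a + b) / 2 ∈ Icc (0:ℝ) 1 := ⟨by linarith [ha.1, hb.1], by linarith [ha.2, hb.2]⟩
      have hfm : f ((a + b) / 2) ≤ 0 := by linarith [hmid a ha b hb]
      rcases le_total t ((a + b) / 2) with h | h
      · exact ⟨a, ha, _, hm, hat, h, by rw [pow_succ]; linarith, hfa, hfm⟩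
      · exact ⟨_, hm, b, hb, h, htb, by rw [pow_succ]; linarith, hfm, hfb⟩
  have hbound : ∀ n : ℕ, f t ≤ |K| * (2⁻¹ : ℝ) ^ n := by
    intro n
    obtain ⟨a, ha, b, -, hat, htb, hab, hfa, -⟩ := bisect n
    have hta : |t - a| ≤ (2⁻¹ : ℝ) ^ n := by rw [abs_of_nonneg (by linarith)]; linarith
    calc f t ≤ f a + K * |t - a| := hlip a ha t ht
      _ ≤ 0 + |K| * |t - a| := by gcongr; exact le_abs_self K
      _ ≤ |K| * (2⁻¹ : ℝ) ^ n := by rw [zero_add]; gcongr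
  have hlim : Tendsto (fun n : ℕ => |K| * (2⁻¹ : ℝ) ^ n) atTop (𝓝 0) := by
    simpa using (tendsto_pow_atTop_nhds_zero_of_lt_one (by norm_num : (0:ℝ) ≤ 2⁻¹)
      (by norm_num)).const_mul |K|
  exact ge_of_tendsto' hlim hbound

theorem le_convex_combination_of_midpoint_le_of_lipschitz {g : ℝ → ℝ} {K : ℝ}
    (hmid : ∀ s ∈ Icc (0:ℝ) 1, ∀ t ∈ Icc (0:ℝ) 1, g ((s + t) / 2) ≤ (g s + g t) / 2)
    (hlip : ∀ s ∈ Icc (0:ℝ) 1, ∀ t ∈ Icc (0:ℝ) 1, g t ≤ g s + K * |t - s|)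
    {t : ℝ} (ht : t ∈ Icc (0:ℝ) 1) : g t ≤ (1 - t) * g 0 + t * g 1 := by
  set f : ℝ → ℝ := fun t => g t - ((1 - t) * g 0 + t * g 1) with hf
  suffices f t ≤ 0 by simp only [hf] at this; linarith
  refine nonpos_of_midpoint_le_of_lipschitz (K := K + |g 1 - g 0|) (fun s hs t ht => ?_)
    (fun s hs t ht => ?_) (by simp [hf]) (by simp [hf]) ht
  · simp only [hf]; linarith [hmid s hs t ht]
  · have habs : (s - t) * (g 1 - g 0) ≤ |t - s| * |g 1 - g 0| := by
      rw [abs_sub_comm, ← abs_mul]; exact le_abs_self _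
    simp only [hf]; linarith [hlip s hs t ht]

theorem tendsto_atTop_of_abs_sub_natCast_le {L : ℕ → ℝ} {C : ℝ} (h : ∀ n : ℕ, |L n - n| ≤ C) :
    Tendsto L atTop atTop :=
  tendsto_atTop_mono (fun n => by linarith [(abs_le.1 (h n)).1])
    (tendsto_atTop_add_const_right _ (-C) tendsto_natCast_atTop_atTop)

section CAT0Geometry

variable {X : Type*} [MetricSpace X]

def IsMidpoint (x y m : X) : Prop := dist x m = dist x y / 2 ∧ dist y m = dist x y / 2

theorem IsMidpoint.symm {x y m : X} (h : IsMidpoint x y m) : IsMidpoint y x m := by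
  rw [IsMidpoint, dist_comm y x]; exact ⟨h.2, h.1⟩

theorem GeodesicRay.isGeodesicOn {ξ : ℝ → X} (h : GeodesicRay ξ) (b : ℝ) :
    IsGeodesicOn ξ 0 b := fun s hs t ht => h s t hs.1 ht.1

theorem IsGeodesicOn.isMidpoint {γ : ℝ → X} {a b : ℝ} (h : IsGeodesicOn γ a b)
    {s t : ℝ} (hs : s ∈ Icc a b) (ht : t ∈ Icc a b) :
    IsMidpoint (γ s) (γ t) (γ ((s + t) / 2)) := by
  have hm : (s + t) / 2 ∈ Icc a b := ⟨by linarith [hs.1, ht.1], by linarith [hs.2, ht.2]⟩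
  refine ⟨?_, ?_⟩
  · rw [h s hs _ hm, h s hs t ht, show s - (s + t) / 2 = (s - t) / 2 by ring, abs_div, abs_two]
  · rw [h t ht _ hm, h s hs t ht, show t - (s + t) / 2 = (t - s) / 2 by ring, abs_div, abs_two,
      abs_sub_comm]

theorem exists_geodesicRay_tendsto [ProperSpace X] {x : X} {γ : ℕ → ℝ → X} {L : ℕ → ℝ}
    (hL : Tendsto L atTop atTop) (hγ : ∀ n, IsGeodesicOn (γ n) 0 (L n)) (h0 : ∀ n, γ n 0 = x) :
    ∃ 𝒰 : Ultrafilter ℕ, (𝒰 : Filter ℕ) ≤ atTop ∧ ∃ ξ : ℝ → X, GeodesicRay ξ ∧ ξ 0 = x ∧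
      ∀ t, 0 ≤ t → Tendsto (fun n => γ n t) 𝒰 (𝓝 (ξ t)) := by
  set 𝒰 : Ultrafilter ℕ := Ultrafilter.of atTop
  have h𝒰 : (𝒰 : Filter ℕ) ≤ atTop := Ultrafilter.of_le _
  have hlong : ∀ t, ∀ᶠ n in (𝒰 : Filter ℕ), t ≤ L n := fun t => h𝒰 (hL.eventually_ge_atTop t)
  have hlim : ∀ t, ∃ y, 0 ≤ t → Tendsto (fun n => γ n t) 𝒰 (𝓝 y) := by
    intro t
    by_cases ht : 0 ≤ t
    · have hmem : Metric.closedBall x t ∈ 𝒰.map (fun n => γ n t) := by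
        rw [Ultrafilter.mem_map]
        filter_upwards [hlong t] with n hn
        rw [mem_preimage, Metric.mem_closedBall, ← h0 n, dist_comm,
          hγ n 0 ⟨le_rfl, ht.trans hn⟩ t ⟨ht, hn⟩, zero_sub, abs_neg, abs_of_nonneg ht]
      obtain ⟨y, -, hy⟩ := (isCompact_closedBall x t).ultrafilter_le_nhds' _ hmem
      exact ⟨y, fun _ => hy⟩
    · exact ⟨x, fun h => absurd h ht⟩
  choose ξ hξ using hlim
  refine ⟨𝒰, h𝒰, ξ, fun s t hs ht => ?_, ?_, hξ⟩
  · refine tendsto_nhds_unique ((hξ s hs).dist (hξ t ht)) (tendsto_const_nhds.congr' ?_)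
    filter_upwards [hlong s, hlong t] with n hns hnt
    exact (hγ n s ⟨hs, hns⟩ t ⟨ht, hnt⟩).symm
  · refine tendsto_nhds_unique (hξ 0 le_rfl) ?_
    simp only [h0]
    exact tendsto_const_nhds

namespace CAT0

variable (hX : CAT0 X)
include hX

theorem exists_isMidpoint (x y : X) : ∃ m, IsMidpoint x y m := by
  obtain ⟨γ, h0, h1, hγ⟩ := hX.1 x y
  have := hγ.isMidpoint (s := 0) (t := dist x y) ⟨le_rfl, dist_nonneg⟩ ⟨dist_nonneg, le_rfl⟩
  rw [h0, h1] at this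
  exact ⟨_, this⟩

theorem dist_isMidpoint_isMidpoint_le_of_left {x y z m₁ m₂ : X}
    (h₁ : IsMidpoint x y m₁) (h₂ : IsMidpoint x z m₂) : dist m₁ m₂ ≤ dist y z / 2 := by
  have a := hX.2 m₁ x z m₂ h₂.1 h₂.2
  have b := hX.2 z x y m₁ h₁.1 h₁.2
  rw [dist_comm m₁ x, h₁.1, dist_comm m₁ z] at a
  rw [dist_comm z x, dist_comm z y] at b
  refine (pow_le_pow_iff_left₀ dist_nonneg (by positivity) two_ne_zero).1 ?_
  nlinarith

theorem dist_isMidpoint_isMidpoint_le {x y x' y' m₁ m₂ : X}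
    (h₁ : IsMidpoint x y m₁) (h₂ : IsMidpoint x' y' m₂) :
    dist m₁ m₂ ≤ (dist x x' + dist y y') / 2 := by
  obtain ⟨m, hm⟩ := hX.exists_isMidpoint x y'
  calc dist m₁ m₂ ≤ dist m₁ m + dist m m₂ := dist_triangle _ _ _
    _ ≤ dist y y' / 2 + dist x x' / 2 := add_le_add
        (hX.dist_isMidpoint_isMidpoint_le_of_left h₁ hm)
        (hX.dist_isMidpoint_isMidpoint_le_of_left hm.symm h₂.symm)
    _ = (dist x x' + dist y y') / 2 := by ring

theorem dist_isGeodesicOn_le {γ σ : ℝ → X} {L L' : ℝ} (hL : 0 ≤ L) (hL' : 0 ≤ L')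
    (hγ : IsGeodesicOn γ 0 L) (hσ : IsGeodesicOn σ 0 L') {θ : ℝ} (hθ : θ ∈ Icc (0:ℝ) 1) :
    dist (γ (θ * L)) (σ (θ * L')) ≤
      (1 - θ) * dist (γ 0) (σ 0) + θ * dist (γ L) (σ L') := by
  have hmem : ∀ {M : ℝ}, 0 ≤ M → ∀ t ∈ Icc (0:ℝ) 1, t * M ∈ Icc 0 M := fun hM t ht =>
    ⟨mul_nonneg ht.1 hM, mul_le_of_le_one_left hM ht.2⟩
  have key := le_convex_combination_of_midpoint_le_of_lipschitz
    (g := fun t => dist (γ (t * L)) (σ (t * L'))) (K := L + L') (fun s hs t ht => ?_)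
    (fun s hs t ht => ?_) hθ
  · simpa using key
  · have := hX.dist_isMidpoint_isMidpoint_le (hγ.isMidpoint (hmem hL s hs) (hmem hL t ht))
      (hσ.isMidpoint (hmem hL' s hs) (hmem hL' t ht))
    have e : ∀ M : ℝ, (s + t) / 2 * M = (s * M + t * M) / 2 := fun M => by ring
    rwa [e L, e L']
  · have d₁ := hγ _ (hmem hL t ht) _ (hmem hL s hs)
    have d₂ := hσ _ (hmem hL' s hs) _ (hmem hL' t ht)
    rw [← sub_mul, abs_mul, abs_of_nonneg hL] at d₁
    rw [← sub_mul, abs_mul, abs_of_nonneg hL', abs_sub_comm] at d₂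
    have := dist_triangle4 (γ (t * L)) (γ (s * L)) (σ (s * L')) (σ (t * L'))
    linarith

theorem dist_isGeodesicOn_le_add {γ σ : ℝ → X} {L L' s : ℝ} (hγ : IsGeodesicOn γ 0 L)
    (hσ : IsGeodesicOn σ 0 L') (hs : 0 ≤ s) (hsL : s ≤ L) (hsL' : s ≤ L') :
    dist (γ s) (σ s) ≤ dist (γ 0) (σ 0) + s / L * (dist (γ L) (σ L') + |L - L'|) := by
  rcases (hs.trans hsL).eq_or_lt with hL | hL
  · obtain rfl : s = 0 := by linarith
    simp
  have hθ : s / L ∈ Icc (0:ℝ) 1 := ⟨div_nonneg hs hL.le, div_le_one_of_le₀ hsL hL.le⟩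
  have hconv := hX.dist_isGeodesicOn_le hL.le (hs.trans hsL') hγ hσ hθ
  rw [div_mul_cancel₀ _ hL.ne'] at hconv
  have hshift : dist (σ (s / L * L')) (σ s) = s / L * |L - L'| := by
    rw [hσ _ ⟨mul_nonneg hθ.1 (hs.trans hsL'), mul_le_of_le_one_left (hs.trans hsL') hθ.2⟩ _
      ⟨hs, hsL'⟩]
    rw [show s / L * L' - s = s / L * (L' - L) by rw [mul_sub, div_mul_cancel₀ _ hL.ne'],
      abs_mul, abs_of_nonneg hθ.1, abs_sub_comm]
  have := dist_triangle (γ s) (σ (s / L * L')) (σ s)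
  nlinarith [hθ.1, dist_nonneg (x := γ 0) (y := σ 0)]

theorem exists_geodesicRay_asymptotic [ProperSpace X] {ξ₀ : ℝ → X}
    (hξ₀ : GeodesicRay ξ₀) (x : X) :
    ∃ ξ : ℝ → X, GeodesicRay ξ ∧ ξ 0 = x ∧
      ∀ t, 0 ≤ t → dist (ξ t) (ξ₀ t) ≤ 2 * dist x (ξ₀ 0) := by
  have hlen : ∀ n : ℕ, |dist x (ξ₀ n) - n| ≤ dist x (ξ₀ 0) := by
    intro n
    have := abs_dist_sub_le x (ξ₀ 0) (ξ₀ n)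
    rwa [hξ₀ 0 n le_rfl n.cast_nonneg, zero_sub, abs_neg, Nat.abs_cast] at this
  have hL := tendsto_atTop_of_abs_sub_natCast_le hlen
  choose γ h0 h1 hγ using fun n : ℕ => hX.1 x (ξ₀ n)
  obtain ⟨𝒰, h𝒰, ξ, hξ, hξ0, hlim⟩ := exists_geodesicRay_tendsto hL hγ h0
  refine ⟨ξ, hξ, hξ0, fun t ht => le_of_tendsto ((hlim t ht).dist tendsto_const_nhds) ?_⟩
  filter_upwards [h𝒰 (hL.eventually_ge_atTop t),
    h𝒰 (tendsto_natCast_atTop_atTop.eventually_ge_atTop t)] with n hLn hn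
  have htravel := hX.dist_isGeodesicOn_le_add (hγ n) (hξ₀.isGeodesicOn n) ht hLn hn
  rw [h0, h1, dist_self, zero_add] at htravel
  have : t / dist x (ξ₀ n) * |dist x (ξ₀ n) - n| ≤ dist x (ξ₀ 0) :=
    (mul_le_of_le_one_left (abs_nonneg _) (div_le_one_of_le₀ hLn dist_nonneg)).trans (hlen n)
  linarith

theorem convergesTo_of_dist_le {x₀ : X} {x : ℕ → X} {ξ : Ray X} (hξ0 : ξ.1 0 = x₀) {C : ℝ}
    (hC : ∀ n : ℕ, dist (x n) (ξ.1 n) ≤ C) : ConvergesTo x₀ x ξ := by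
  intro r hr ε hε
  have hlen : ∀ n : ℕ, |dist x₀ (x n) - n| ≤ C := by
    intro n
    have hξn : dist (ξ.1 n) x₀ = n := by
      rw [← hξ0, ξ.2 n 0 n.cast_nonneg le_rfl, sub_zero, Nat.abs_cast]
    have := abs_dist_sub_le (x n) (ξ.1 n) x₀
    rw [hξn, dist_comm] at this
    exact this.trans (hC n)
  have hL := tendsto_atTop_of_abs_sub_natCast_le hlen
  obtain ⟨n₀, hn₀⟩ := eventually_atTop.1 ((tendsto_natCast_atTop_atTop.eventually_ge_atTop r).and
    ((hL.eventually_gt_atTop r).and (hL.eventually_gt_atTop (2 * C * r / ε))))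
  refine ⟨n₀, fun n hn => ?_⟩
  obtain ⟨hrn, hrL, hεL⟩ := hn₀ n hn
  refine ⟨hrL, fun γ hγ h0 h1 => ?_⟩
  have hL0 : 0 < dist x₀ (x n) := hr.trans hrL
  have htravel := hX.dist_isGeodesicOn_le_add hγ (ξ.2.isGeodesicOn n) hr.le hrL.le hrn
  rw [h0, h1, hξ0, dist_self, zero_add] at htravel
  have hend : dist (x n) (ξ.1 n) + |dist x₀ (x n) - n| ≤ 2 * C := by linarith [hC n, hlen n]
  have hsmall : r / dist x₀ (x n) * (2 * C) < ε := by
    rw [div_mul_eq_mul_div, div_lt_iff₀ hL0]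
    rw [div_lt_iff₀ hε] at hεL
    linarith
  rw [dist_comm]
  calc dist (γ r) (ξ.1 r) ≤ r / dist x₀ (x n) * (2 * C) :=
        htravel.trans (mul_le_mul_of_nonneg_left hend (by positivity))
    _ < ε := hsmall

end CAT0

end CAT0Geometry

section GroupAction

variable {G X : Type*} [Group G] [MetricSpace X] [MulAction G X]

theorem tLenSMul_le (g : G) (x : X) : tLenSMul X g ≤ dist x (g • x) :=
  ciInf_le ⟨0, by rintro _ ⟨y, rfl⟩; exact dist_nonneg⟩ x

theorem inv_mem_Zg {g v : G} (hv : v ∈ Zg g) : v⁻¹ ∈ Zg g :=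
  Commute.inv_right hv

theorem tendsto_dist_pow_smul_atTop (hproper : ProperAction G X) {g : G} (hg : ¬IsOfFinOrder g)
    (x : X) : Tendsto (fun n : ℕ => dist x (g ^ n • x)) atTop atTop := by
  refine tendsto_atTop.2 fun b => ?_
  rw [← Nat.cofinite_eq_atTop, eventually_cofinite]
  exact ((hproper x b).preimage (injective_pow_iff_not_isOfFinOrder.2 hg).injOn).subset
    fun n hn => (not_le.1 hn).le

theorem tLenSMul_pos (hproper : ProperAction G X) {g : G} (hg : ¬IsOfFinOrder g) {x : X}
    (hx : x ∈ minSetSMul X g) : 0 < tLenSMul X g := by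
  rw [← show dist x (g • x) = tLenSMul X g from hx]
  by_contra! h
  have hfix : ∀ n : ℕ, g ^ n • x = x := fun n =>
    MulAction.mem_stabilizer_iff.1 (Subgroup.pow_mem _ (dist_le_zero.1 h).symm n)
  obtain ⟨n, hn⟩ := ((tendsto_dist_pow_smul_atTop hproper hg x).eventually_gt_atTop 0).exists
  simp [hfix] at hn

variable [IsIsometricSMul G X]

theorem continuous_dist_smul (g : G) : Continuous fun y : X => dist y (g • y) :=
  continuous_id.dist (continuous_const_smul g)

theorem dist_smul_smul_of_mem_Zg {g v : G} (hv : v ∈ Zg g) (y : X) :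
    dist (v • y) (g • v • y) = dist y (g • y) := by
  rw [smul_smul, hv, mul_smul, dist_smul]

/-- The centralizer of `g` acts cocompactly on every sublevel set of the displacement of `g`. -/
theorem exists_mem_Zg_dist_smul_le (hproper : ProperAction G X)
    (hcocompact : CocompactAction G X) (g : G) (x₀ : X) (c : ℝ) :
    ∃ R, ∀ y : X, dist y (g • y) ≤ c → ∃ v ∈ Zg g, dist (v • x₀) y ≤ R := by
  obtain ⟨N, -, hN⟩ := hcocompact x₀
  set F := {u : G | dist x₀ (u • x₀) ≤ 2 * N + c}
  have hconjugator : ∀ u : G, ∃ r : G, (∃ w, w⁻¹ * g * w = u) → r⁻¹ * g * r = u := fun u => by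
    by_cases h : ∃ w, w⁻¹ * g * w = u
    · obtain ⟨w, hw⟩ := h
      exact ⟨w, fun _ => hw⟩
    · exact ⟨1, fun h' => absurd h' h⟩
  choose r hr using hconjugator
  obtain ⟨R, hR⟩ := ((hproper x₀ (2 * N + c)).image fun u => dist ((r u)⁻¹ • x₀) x₀).bddAbove
  refine ⟨R + N, fun y hy => ?_⟩
  obtain ⟨w, hw⟩ := hN y
  set u := w⁻¹ * g * w
  -- Cocompactness conjugates `g` into the finite set `F` of elements moving `x₀` boundedly.
  have huF : u ∈ F := by
    have hu : dist x₀ (u • x₀) = dist (w • x₀) (g • w • x₀) := by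
      rw [← dist_smul w, smul_smul, smul_smul, show w * u = g * w by simp only [u]; group]
    have := dist_triangle4 (w • x₀) y (g • y) (g • w • x₀)
    rw [dist_smul, dist_comm y (w • x₀)] at this
    show dist x₀ (u • x₀) ≤ 2 * N + c
    linarith
  have hρ : (r u)⁻¹ * g * r u = u := hr u ⟨w, rfl⟩
  set ρ := r u
  refine ⟨w * ρ⁻¹, ?_, ?_⟩
  · show g * (w * ρ⁻¹) = w * ρ⁻¹ * g
    calc g * (w * ρ⁻¹) = w * u * ρ⁻¹ := by simp only [u]; group
      _ = w * ρ⁻¹ * g := by rw [← hρ]; group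
  · calc dist ((w * ρ⁻¹) • x₀) y ≤ dist ((w * ρ⁻¹) • x₀) (w • x₀) + dist (w • x₀) y :=
          dist_triangle _ _ _
      _ ≤ R + N := by
          rw [mul_smul, dist_smul]
          exact add_le_add (hR ⟨u, huF, rfl⟩) hw

theorem minSetSMul_nonempty [ProperSpace X] (hproper : ProperAction G X)
    (hcocompact : CocompactAction G X) (g : G) (x₀ : X) : (minSetSMul X g).Nonempty := by
  set τ := tLenSMul X g
  obtain ⟨R, hR⟩ := exists_mem_Zg_dist_smul_le hproper hcocompact g x₀ (τ + 1)
  have hball : ∀ y : X, dist y (g • y) ≤ τ + 1 →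
      ∃ y' ∈ Metric.closedBall x₀ R, dist y' (g • y') = dist y (g • y) := by
    intro y hy
    obtain ⟨v, hv, hvy⟩ := hR y hy
    refine ⟨v⁻¹ • y, ?_, dist_smul_smul_of_mem_Zg (inv_mem_Zg hv) y⟩
    rwa [Metric.mem_closedBall, ← dist_smul v, smul_inv_smul, dist_comm]
  have : Nonempty X := ⟨x₀⟩
  obtain ⟨y₀, hy₀⟩ := exists_lt_of_ciInf_lt (lt_add_one τ)
  obtain ⟨_, hy₀', -⟩ := hball y₀ hy₀.le
  obtain ⟨z, -, hz⟩ := (isCompact_closedBall x₀ R).exists_isMinOn ⟨_, hy₀'⟩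
    (continuous_dist_smul g).continuousOn
  refine ⟨z, le_antisymm ?_ (tLenSMul_le g z)⟩
  by_contra! hlt
  obtain ⟨y, hy⟩ := exists_lt_of_ciInf_lt (lt_min hlt (lt_add_one τ))
  obtain ⟨y', hy'R, hy'⟩ := hball y (hy.trans_le (min_le_right _ _)).le
  have := hz hy'R
  change dist z (g • z) ≤ dist y' (g • y') at this
  linarith [hy.trans_le (min_le_left _ _)]

end GroupAction

namespace CAT0

variable {G X : Type*} [Group G] [MetricSpace X] [MulAction G X] [IsIsometricSMul G X]
  (hX : CAT0 X)
include hX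

theorem dist_smul_isGeodesicOn_le (g : G) {γ : ℝ → X} {L : ℝ} (hL : 0 ≤ L)
    (hγ : IsGeodesicOn γ 0 L) {θ : ℝ} (hθ : θ ∈ Icc (0:ℝ) 1) :
    dist (γ (θ * L)) (g • γ (θ * L)) ≤
      (1 - θ) * dist (γ 0) (g • γ 0) + θ * dist (γ L) (g • γ L) :=
  hX.dist_isGeodesicOn_le hL hL hγ (fun s hs t ht => (dist_smul g _ _).trans (hγ s hs t ht)) hθ

theorem dist_smul_le_of_isGeodesicOn (g : G) {γ : ℝ → X} {L c : ℝ} (hγ : IsGeodesicOn γ 0 L)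
    (h0 : dist (γ 0) (g • γ 0) ≤ c) (hL : dist (γ L) (g • γ L) ≤ c) {s : ℝ}
    (hs : s ∈ Icc 0 L) : dist (γ s) (g • γ s) ≤ c := by
  rcases (hs.1.trans hs.2).eq_or_lt with hL0 | hL0
  · obtain rfl : s = 0 := by linarith [hs.1, hs.2]
    exact h0
  have hθ : s / L ∈ Icc (0:ℝ) 1 := ⟨div_nonneg hs.1 hL0.le, div_le_one_of_le₀ hs.2 hL0.le⟩
  have := hX.dist_smul_isGeodesicOn_le g hL0.le hγ hθ
  rw [div_mul_cancel₀ _ hL0.ne'] at this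
  nlinarith [hθ.1, hθ.2]

theorem dist_smul_le_of_geodesicRay (g : G) {ξ : ℝ → X} (hξ : GeodesicRay ξ) {C : ℝ}
    (hC : ∀ t, 0 ≤ t → dist (ξ t) (g • ξ t) ≤ C) {t : ℝ} (ht : 0 ≤ t) :
    dist (ξ t) (g • ξ t) ≤ dist (ξ 0) (g • ξ 0) := by
  set f := fun s => dist (ξ s) (g • ξ s)
  have hlim : Tendsto (fun T => f 0 + t / T * (C - f 0)) atTop (𝓝 (f 0)) := by
    simpa using tendsto_const_nhds.add
      ((tendsto_const_nhds.div_atTop tendsto_id).mul_const (C - f 0))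
  refine ge_of_tendsto hlim ?_
  filter_upwards [eventually_gt_atTop t] with T htT
  have hT : 0 < T := ht.trans_lt htT
  have hθ : t / T ∈ Icc (0:ℝ) 1 := ⟨div_nonneg ht hT.le, div_le_one_of_le₀ htT.le hT.le⟩
  have := hX.dist_smul_isGeodesicOn_le g hT.le (hξ.isGeodesicOn T) hθ
  rw [div_mul_cancel₀ _ hT.ne'] at this
  nlinarith [hC T hT.le, hθ.1]

theorem exists_geodesicRay_subset_minSetSMul [ProperSpace X] (hproper : ProperAction G X)
    {g : G} (hg : ¬IsOfFinOrder g) {x : X} (hx : x ∈ minSetSMul X g) :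
    ∃ ξ : ℝ → X, GeodesicRay ξ ∧ ξ 0 = x ∧ ∀ t, 0 ≤ t → ξ t ∈ minSetSMul X g := by
  choose γ h0 h1 hγ using fun n : ℕ => hX.1 x (g ^ n • x)
  have hL := tendsto_dist_pow_smul_atTop hproper hg x
  obtain ⟨𝒰, h𝒰, ξ, hξ, hξ0, hlim⟩ := exists_geodesicRay_tendsto hL hγ h0
  refine ⟨ξ, hξ, hξ0, fun t ht => le_antisymm ?_ (tLenSMul_le g _)⟩
  refine le_of_tendsto (((continuous_dist_smul g).tendsto _).comp (hlim t ht)) ?_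
  filter_upwards [h𝒰 (hL.eventually_ge_atTop t)] with n hn
  -- `γ n` joins `x` to `g ^ n • x`, both of which `g` moves by exactly `tLenSMul X g`.
  refine hX.dist_smul_le_of_isGeodesicOn g (hγ n) (by rw [h0]; exact hx.le) ?_ ⟨ht, hn⟩
  rw [h1, smul_smul, ← pow_succ', pow_succ, mul_smul, dist_smul]
  exact hx.le

theorem exists_geodesicRay_subset_minSetSMul_asymptotic [ProperSpace X] {g : G} {x : X}
    (hx : x ∈ minSetSMul X g) {ξ₀ : ℝ → X} (hξ₀ : GeodesicRay ξ₀)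
    (hfix : Asymptotic (fun t => g • ξ₀ t) ξ₀) :
    ∃ ξ : ℝ → X, GeodesicRay ξ ∧ Asymptotic ξ ξ₀ ∧ ∀ t, 0 ≤ t → ξ t ∈ minSetSMul X g := by
  obtain ⟨ξ, hξ, hξ0, hnear⟩ := hX.exists_geodesicRay_asymptotic hξ₀ x
  obtain ⟨N, hN⟩ := hfix
  refine ⟨ξ, hξ, ⟨_, hnear⟩, fun t ht => le_antisymm ?_ (tLenSMul_le g _)⟩
  have hbdd : ∀ t, 0 ≤ t → dist (ξ t) (g • ξ t) ≤ 4 * dist x (ξ₀ 0) + N := by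
    intro t ht
    have := dist_triangle4 (ξ t) (ξ₀ t) (g • ξ₀ t) (g • ξ t)
    rw [dist_smul, dist_comm (ξ₀ t), dist_comm (ξ₀ t)] at this
    linarith [hnear t ht, hN t ht]
  have := hX.dist_smul_le_of_geodesicRay g hξ hbdd ht
  rwa [hξ0, show dist x (g • x) = tLenSMul X g from hx] at this

end CAT0

section Boundary

variable {G X : Type*} [Group G] [MetricSpace X] [MulAction G X] [IsIsometricSMul G X]

theorem mk_mem_fixedPoints_boundarySMul_iff {g : G} {ξ : Ray X} :
    Quotient.mk (raySetoid X) ξ ∈ fixedPoints (boundarySMul g) ↔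
      Asymptotic (fun t => g • ξ.1 t) ξ.1 :=
  Quotient.eq (r := raySetoid X)

theorem subBoundary_minSetSMul_subset_fixedPoints (g : G) :
    subBoundary (minSetSMul X g) ⊆ fixedPoints (boundarySMul g) := by
  rintro _ ⟨ξ, hξ, rfl⟩
  exact mk_mem_fixedPoints_boundarySMul_iff.2
    ⟨tLenSMul X g, fun t ht => (dist_comm _ _).trans_le (hξ t ht).le⟩

namespace CAT0

variable (hX : CAT0 X)
include hX

theorem fixedPoints_subset_subBoundary_minSetSMul [ProperSpace X] {g : G}
    (hmin : (minSetSMul X g).Nonempty) :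
    fixedPoints (boundarySMul g) ⊆ subBoundary (minSetSMul X g) := by
  obtain ⟨x, hx⟩ := hmin
  intro α hα
  induction α using Quotient.inductionOn with | h ξ₀ => ?_
  obtain ⟨ξ, hξ, hasym, hξmin⟩ := hX.exists_geodesicRay_subset_minSetSMul_asymptotic hx ξ₀.2
    (mk_mem_fixedPoints_boundarySMul_iff.1 hα)
  exact ⟨⟨ξ, hξ⟩, hξmin, Quotient.sound hasym⟩

theorem limitSet_Zg_subset_fixedPoints (g : G) (x₀ : X) :
    LimitSet (Zg g) x₀ ⊆ fixedPoints (boundarySMul g) := by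
  rintro _ ⟨ξ, hξ0, rfl, v, hv, hconv⟩
  refine mk_mem_fixedPoints_boundarySMul_iff.2 ⟨dist x₀ (g • x₀), fun t ht => ?_⟩
  show dist (g • ξ.1 t) (ξ.1 t) ≤ _
  rcases ht.eq_or_lt with rfl | ht
  · rw [hξ0, dist_comm]
  refine le_of_forall_pos_le_add fun ε hε => ?_
  obtain ⟨n, hn⟩ := hconv t ht (ε / 2) (half_pos hε)
  obtain ⟨hlong, hclose⟩ := hn n le_rfl
  obtain ⟨γ, h0, h1, hγ⟩ := hX.1 x₀ (v n • x₀)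
  -- Since `v n` commutes with `g`, both ends of `γ` are moved by `g` exactly as much as `x₀`.
  have hdisp : dist (γ t) (g • γ t) ≤ dist x₀ (g • x₀) :=
    hX.dist_smul_le_of_isGeodesicOn g hγ (by rw [h0])
      (by rw [h1, smul_smul, hv n, mul_smul, dist_smul]) ⟨ht.le, hlong.le⟩
  have hξγ := hclose γ hγ h0 h1
  have := dist_triangle4 (g • ξ.1 t) (g • γ t) (γ t) (ξ.1 t)
  rw [dist_smul, dist_comm (g • γ t) (γ t), dist_comm (γ t) (ξ.1 t)] at this
  linarith

theorem fixedPoints_subset_limitSet_Zg [ProperSpace X] (hproper : ProperAction G X)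
    (hcocompact : CocompactAction G X) {g : G} (hmin : (minSetSMul X g).Nonempty) (x₀ : X) :
    fixedPoints (boundarySMul g) ⊆ LimitSet (Zg g) x₀ := by
  obtain ⟨x, hx⟩ := hmin
  intro α hα
  induction α using Quotient.inductionOn with | h ξ₀ => ?_
  obtain ⟨ξm, -, ⟨N, hN⟩, hξm⟩ := hX.exists_geodesicRay_subset_minSetSMul_asymptotic hx ξ₀.2
    (mk_mem_fixedPoints_boundarySMul_iff.1 hα)
  obtain ⟨ξ, hξ, hξ0, hnear⟩ := hX.exists_geodesicRay_asymptotic ξ₀.2 x₀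
  obtain ⟨R, hR⟩ := exists_mem_Zg_dist_smul_le hproper hcocompact g x₀ (tLenSMul X g)
  choose v hv hvR using fun n : ℕ => hR (ξm n) (hξm n n.cast_nonneg).le
  refine ⟨⟨ξ, hξ⟩, hξ0, Quotient.sound ⟨_, hnear⟩, v, hv,
    hX.convergesTo_of_dist_le hξ0 (C := R + N + 2 * dist x₀ (ξ₀.1 0)) fun n => ?_⟩
  have := dist_triangle4 (v n • x₀) (ξm n) (ξ₀.1 n) (ξ n)
  rw [dist_comm (ξ₀.1 n)] at this
  linarith [hvR n, hN n n.cast_nonneg, hnear n n.cast_nonneg]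

end CAT0

end Boundary

/-- **Corollary 3.** For a geometric action of `G` on a proper CAT(0)
space `X` and `g ∈ G` of infinite order: `g` acts as a hyperbolic isometry and
`𝓕_g = L(Z_g) = ∂Min(g)`; in particular `𝓕_g ≠ ∅`. -/
theorem infinite_order_fixedSet {G X : Type*} [Group G] [MetricSpace X] [ProperSpace X]
    [MulAction G X] [IsIsometricSMul G X]
    (hX : CAT0 X) (hproper : ProperAction G X) (hcocompact : CocompactAction G X)
    (g : G) (hg : ¬ IsOfFinOrder g) (x₀ : X) :
    ((minSetSMul X g).Nonempty ∧ 0 < tLenSMul X g) ∧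
    {α : Boundary X | boundarySMul g α = α} = LimitSet (Zg g) x₀ ∧
    {α : Boundary X | boundarySMul g α = α} = subBoundary (minSetSMul X g) ∧
    {α : Boundary X | boundarySMul g α = α}.Nonempty := by
  obtain ⟨x, hx⟩ := minSetSMul_nonempty hproper hcocompact g x₀
  have hmin : (minSetSMul X g).Nonempty := ⟨x, hx⟩
  have hsub := subBoundary_minSetSMul_subset_fixedPoints (X := X) g
  obtain ⟨ξ, hξ, -, hξmin⟩ := hX.exists_geodesicRay_subset_minSetSMul hproper hg hx
  exact ⟨⟨hmin, tLenSMul_pos hproper hg hx⟩,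
    (hX.fixedPoints_subset_limitSet_Zg hproper hcocompact hmin x₀).antisymm
      (hX.limitSet_Zg_subset_fixedPoints g x₀),
    (hX.fixedPoints_subset_subBoundary_minSetSMul hmin).antisymm hsub,
    ⟨_, hsub ⟨⟨ξ, hξ⟩, hξmin, rfl⟩⟩⟩
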